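/- Let N ≥ 1. Define r ∈ Matrix (Fin N × Fin N) (Fin N × Fin N) ℂ by r_{(p,q),(r,s)} := [p=q=r=s] + 2·[p=s ∧ q=r ∧ p>q] (Iverson brackets), and let r^{T₁} be its partial transpose in the first factor: (r^{T₁})_{(p,q),(r,s)} := r_{(r,q),(p,s)}. For A ∈ Matrix (Fin N) (Fin N) ℂ set A₁ := A ⊗ 𝟙_N and A₂ := 𝟙_N ⊗ A (Kronecker products, as matrices indexed by Fin N × Fin N). Then the Poisson bracket admits the r-matrix form: for all A and all indices i, j, k, l, π_{(i,j),(k,l)}(A) = −( A₂·A₁·r − r·A₁·A₂ + A₂·r^{T₁}·A₁ − A₁·r^{T₁}·A₂ )_{(i,k),(j,l)}. -/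

import Mathlib

open Matrix Kronecker

noncomputable section

/-- The sign of the difference of two indices, as a complex number
(`sgn : ℤ → ℤ` with `sgn 0 = 0`). -/
def fsgn {N : ℕ} (a b : Fin N) : ℂ := ((((a : ℕ) : ℤ) - ((b : ℕ) : ℤ)).sign : ℤ)

/-- The quadratic Poisson bivector components. -/
def pb {N : ℕ} (A : Matrix (Fin N) (Fin N) ℂ) (i j k l : Fin N) : ℂ :=
  (fsgn j l + fsgn i k) * A i l * A k j
    + (fsgn j k + 1) * A j l * A i k
    + (fsgn i l - 1) * A l j * A k i

/-- The classical `r`-matrix `r = Σ_i E_{ii}⊗E_{ii} + 2Σ_{i>j} E_{ij}⊗E_{ji}`: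
`r_{(p,q),(r,s)} = [p=q=r=s] + 2·[p=s ∧ q=r ∧ p>q]`. -/
def rmat (N : ℕ) : Matrix (Fin N × Fin N) (Fin N × Fin N) ℂ :=
  fun pq rs =>
    (if pq.1 = pq.2 ∧ pq.1 = rs.1 ∧ pq.1 = rs.2 then 1 else 0)
      + 2 * (if pq.1 = rs.2 ∧ pq.2 = rs.1 ∧ pq.2 < pq.1 then 1 else 0)

/-- The partial transpose of `r` in the first tensor factor:
`(r^{T₁})_{(p,q),(r,s)} = r_{(r,q),(p,s)}`. -/
def rmatT1 (N : ℕ) : Matrix (Fin N × Fin N) (Fin N × Fin N) ℂ :=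
  fun pq rs => rmat N (rs.1, pq.2) (pq.1, rs.2)

/-!
Both `r` and `r^{T₁}` are monomial in the Kronecker basis:
`r = Σ_{p,q} (1 + sgn(p - q)) E_{pq} ⊗ E_{qp}` is a weighted flip and
`r^{T₁} = Σ_{p,r} (1 + sgn(r - p)) E_{pr} ⊗ E_{pr}`. Hence each of the four products has a
single-term entry, a sign weight times a product of two entries of `A`, and their alternating sum
is `π` after using `sgn(b - a) = -sgn(a - b)`.
-/

lemma fsgn_of_lt {N : ℕ} {a b : Fin N} (h : a < b) : fsgn a b = -1 := by
  have : ((a : ℕ) : ℤ) - (b : ℕ) < 0 := by omega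
  simp [fsgn, Int.sign_eq_neg_one_of_neg this]

lemma fsgn_of_gt {N : ℕ} {a b : Fin N} (h : b < a) : fsgn a b = 1 := by
  have : 0 < ((a : ℕ) : ℤ) - (b : ℕ) := by omega
  simp [fsgn, Int.sign_eq_one_of_pos this]

lemma fsgn_swap {N : ℕ} (a b : Fin N) : fsgn b a = -fsgn a b := by
  rw [fsgn, fsgn, ← neg_sub, Int.sign_neg, Int.cast_neg]

lemma one_add_fsgn {N : ℕ} (a b : Fin N) :
    1 + fsgn a b = (if a = b then 1 else 0) + 2 * if b < a then 1 else 0 := by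
  rcases lt_trichotomy a b with h | rfl | h
  · simp [h.ne, h.not_gt, fsgn_of_lt h]
  · simp [fsgn]
  · norm_num [h.ne', h, fsgn_of_gt h]

lemma rmat_apply (N : ℕ) (p q r s : Fin N) :
    rmat N (p, q) (r, s) = if p = s ∧ q = r then 1 + fsgn p q else 0 := by
  rw [rmat, one_add_fsgn]
  grind

lemma rmatT1_apply (N : ℕ) (p q r s : Fin N) :
    rmatT1 N (p, q) (r, s) = if p = q ∧ r = s then 1 + fsgn r p else 0 := by
  rw [rmatT1, rmat_apply]
  grind

lemma mul_rmat_apply {ι : Type*} {N : ℕ} (M : Matrix ι (Fin N × Fin N) ℂ) (x : ι) (j l : Fin N) :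
    (M * rmat N) x (j, l) = M x (l, j) * (1 + fsgn l j) := by
  simp [mul_apply, Fintype.sum_prod_type, rmat_apply, ite_and]

lemma rmat_mul_apply {ι : Type*} {N : ℕ} (M : Matrix (Fin N × Fin N) ι ℂ) (i k : Fin N) (y : ι) :
    (rmat N * M) (i, k) y = (1 + fsgn i k) * M (k, i) y := by
  simp [mul_apply, Fintype.sum_prod_type, rmat_apply, ite_and]

lemma one_kronecker_mul_rmatT1_mul_kronecker_one_apply {N : ℕ} (A B : Matrix (Fin N) (Fin N) ℂ)
    (i j k l : Fin N) :
    (((1 : Matrix (Fin N) (Fin N) ℂ) ⊗ₖ A) * rmatT1 N * (B ⊗ₖ (1 : Matrix (Fin N) (Fin N) ℂ)))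
      (i, k) (j, l) = A k i * (1 + fsgn l i) * B l j := by
  simp [mul_apply, Fintype.sum_prod_type, rmatT1_apply, ite_and, one_apply]

lemma kronecker_one_mul_rmatT1_mul_one_kronecker_apply {N : ℕ} (A B : Matrix (Fin N) (Fin N) ℂ)
    (i j k l : Fin N) :
    ((A ⊗ₖ (1 : Matrix (Fin N) (Fin N) ℂ)) * rmatT1 N * ((1 : Matrix (Fin N) (Fin N) ℂ) ⊗ₖ B))
      (i, k) (j, l) = A i k * (1 + fsgn j k) * B j l := by
  simp [mul_apply, Fintype.sum_prod_type, rmatT1_apply, ite_and, one_apply]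

theorem poisson_r_matrix_form_general (N : ℕ)
    (A : Matrix (Fin N) (Fin N) ℂ) (i j k l : Fin N) :
    pb A i j k l
      = -(((1 : Matrix (Fin N) (Fin N) ℂ) ⊗ₖ A) * (A ⊗ₖ (1 : Matrix (Fin N) (Fin N) ℂ)) * rmat N
          - rmat N * (A ⊗ₖ (1 : Matrix (Fin N) (Fin N) ℂ)) * ((1 : Matrix (Fin N) (Fin N) ℂ) ⊗ₖ A)
          + ((1 : Matrix (Fin N) (Fin N) ℂ) ⊗ₖ A) * rmatT1 N * (A ⊗ₖ (1 : Matrix (Fin N) (Fin N) ℂ))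
          - (A ⊗ₖ (1 : Matrix (Fin N) (Fin N) ℂ)) * rmatT1 N * ((1 : Matrix (Fin N) (Fin N) ℂ) ⊗ₖ A))
          (i, k) (j, l) := by
  have hA₂A₁ : ((1 : Matrix (Fin N) (Fin N) ℂ) ⊗ₖ A) * (A ⊗ₖ 1) = A ⊗ₖ A := by
    rw [← mul_kronecker_mul, one_mul, mul_one]
  have hA₁A₂ : (A ⊗ₖ (1 : Matrix (Fin N) (Fin N) ℂ)) * (1 ⊗ₖ A) = A ⊗ₖ A := by
    rw [← mul_kronecker_mul, one_mul, mul_one]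
  rw [Matrix.mul_assoc (rmat N), hA₂A₁, hA₁A₂, Matrix.sub_apply, Matrix.add_apply,
    Matrix.sub_apply, mul_rmat_apply, rmat_mul_apply,
    one_kronecker_mul_rmatT1_mul_kronecker_one_apply,
    kronecker_one_mul_rmatT1_mul_one_kronecker_apply, kronecker_apply, kronecker_apply, pb,
    fsgn_swap l j, fsgn_swap l i]
  ring

/-- the Poisson bracket admits the `r`-matrix form
`π_{(i,j),(k,l)}(A) = −(A₂A₁r − rA₁A₂ + A₂r^{T₁}A₁ − A₁r^{T₁}A₂)_{(i,k),(j,l)}`,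
where `A₁ = A ⊗ 𝟙` and `A₂ = 𝟙 ⊗ A`. -/
theorem poisson_r_matrix_form (N : ℕ) (hN : 1 ≤ N)
    (A : Matrix (Fin N) (Fin N) ℂ) (i j k l : Fin N) :
    pb A i j k l
      = -(((1 : Matrix (Fin N) (Fin N) ℂ) ⊗ₖ A) * (A ⊗ₖ (1 : Matrix (Fin N) (Fin N) ℂ)) * rmat N
          - rmat N * (A ⊗ₖ (1 : Matrix (Fin N) (Fin N) ℂ)) * ((1 : Matrix (Fin N) (Fin N) ℂ) ⊗ₖ A)
          + ((1 : Matrix (Fin N) (Fin N) ℂ) ⊗ₖ A) * rmatT1 N * (A ⊗ₖ (1 : Matrix (Fin N) (Fin N) ℂ))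
          - (A ⊗ₖ (1 : Matrix (Fin N) (Fin N) ℂ)) * rmatT1 N * ((1 : Matrix (Fin N) (Fin N) ℂ) ⊗ₖ A))
          (i, k) (j, l) :=
  poisson_r_matrix_form_general N A i j k l
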